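/- Let 0 → B →^i A →^j D → 0 be an extension of Banach algebras where both B and D have bounded approximate identities (e.g. an extension of C*-algebras). Then the Banach Bar cohomology groups satisfy HR^n(A) = HR^n(D) for all n ≥ 0; in fact both vanish, hence A also has vanishing Bar cohomology. -/

import Mathlib

open NormedSpace Filter

noncomputable section

/-- A Banach space `T` together with a bounded `n`-linear map `φ : Aⁿ → T` is *the*
`n`-fold projective tensor power `A^⊗̂n`. -/
structure IsProjectiveTensorPower
    (A : Type*) [NormedAddCommGroup A] [NormedSpace ℝ A]
    (n : ℕ)
    (T : Type*) [NormedAddCommGroup T] [NormedSpace ℝ T] [CompleteSpace T]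
    (φ : ContinuousMultilinearMap ℝ (fun _ : Fin n => A) T) : Prop where
  dense : (Submodule.span ℝ (Set.range ⇑φ)).topologicalClosure = ⊤
  lift : ∀ (W : Type) [NormedAddCommGroup W] [NormedSpace ℝ W] [CompleteSpace W]
      (m : ContinuousMultilinearMap ℝ (fun _ : Fin n => A) W),
      ∃ g : T →L[ℝ] W, (∀ v, g (φ v) = m v) ∧ ‖g‖ = ‖m‖

/-- The k-th face of an elementary (n+2)-tensor: a₀ ⊗ ⋯ ⊗ a_k a_{k+1} ⊗ ⋯ ⊗ a_{n+1}. -/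
def hochschildFace {A : Type*} [Mul A] {n : ℕ} (v : Fin (n + 2) → A) (k : Fin (n + 1)) :
    Fin (n + 1) → A := fun m =>
  if (m : ℕ) < (k : ℕ) then v m.castSucc
  else if (m : ℕ) = (k : ℕ) then v k.castSucc * v k.succ
  else v m.succ

/-- A Banach algebra has a (two-sided) bounded approximate identity. -/
def HasBoundedApproxIdentity (A : Type*) [NormedRing A] : Prop :=
  ∃ (ι : Type) (l : Filter ι) (e : ι → A), l.NeBot ∧
    (∃ C : ℝ, ∀ α, ‖e α‖ ≤ C) ∧
    (∀ a : A, Tendsto (fun α => a * e α) l (nhds a)) ∧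
    (∀ a : A, Tendsto (fun α => e α * a) l (nhds a))

/-!
With a bounded left approximate identity `(e_α)`, the maps
`s_α (a₀ ⊗ ⋯ ⊗ aₙ) = e_α ⊗ a₀ ⊗ ⋯ ⊗ aₙ` are uniformly bounded and satisfy
`s_α d + d s_α = (e_α ·) ⊗ id`, which tends pointwise to the identity. If `g` is a dual cocycle,
a weak-* cluster point `f` of the bounded net `g ∘ s_α` (Banach–Alaoglu) then satisfies
`f ∘ d = g`, so the dual of the bar complex is exact (Helemskii).

It remains to see that `A` has a bounded left approximate identity. Lift the one of `D` to a
bounded net `u_α` (open mapping theorem) and let `f_β` be the one of `B`. Then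
`a - (u_α + f_β - f_β u_α) a = (1 - f_β)(1 - u_α) a`; here `(1 - u_α) a` is close to some `i b`,
and `(1 - f_β) b` is small, so the net is an approximate identity along the iterated limit,
first in `α`, then in `β` (the `b` depends on `α`).
-/

open Topology

theorem Filter.NeBot.bind {α β : Type*} {l : Filter α} {m : α → Filter β} (hl : l.NeBot)
    (hm : ∀ a, (m a).NeBot) : (l.bind m).NeBot := by
  refine forall_mem_nonempty_iff_neBot.mp fun s hs => ?_
  obtain ⟨t, ht, hts⟩ := mem_bind.mp hs
  obtain ⟨a, ha⟩ := hl.nonempty_of_mem ht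
  exact (hm a).nonempty_of_mem (hts a ha)

theorem Filter.tendsto_add_bind_map_prodMk {ι κ M : Type*} [AddMonoid M] [TopologicalSpace M]
    [ContinuousAdd M] {l : Filter ι} {m : Filter κ} {g : ι → M} {h : ι → κ → M}
    (hg : Tendsto g l (𝓝 0)) (hh : ∀ α, Tendsto (h α) m (𝓝 0)) :
    Tendsto (fun p : ι × κ => g p.1 + h p.1 p.2) (l.bind fun α => m.map (Prod.mk α)) (𝓝 0) := by
  intro U hU
  obtain ⟨V, hV, hVU⟩ := exists_nhds_zero_half hU
  refine mem_map.mpr (mem_bind'.mpr (mem_of_superset (hg hV) fun α hα => ?_))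
  show (fun β => g α + h α β) ⁻¹' U ∈ m
  exact mem_of_superset (hh α hV) fun β hβ => hVU _ hα _ hβ

section HochschildFace

variable {R : Type*} [Mul R]

theorem hochschildFace_cons_zero {n : ℕ} (e : R) (v : Fin (n + 1) → R) :
    hochschildFace (Fin.cons e v : Fin (n + 2) → R) 0 = Function.update v 0 (e * v 0) := by
  funext m
  induction m using Fin.cases with
  | zero => simp [hochschildFace]
  | succ i => simp [hochschildFace, Fin.succ_ne_zero]

theorem hochschildFace_cons_succ {n : ℕ} (e : R) (v : Fin (n + 2) → R) (k : Fin (n + 1)) :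
    hochschildFace (Fin.cons e v) k.succ = Fin.cons e (hochschildFace v k) := by
  funext m
  induction m using Fin.cases with
  | zero => simp [hochschildFace]
  | succ i =>
    simp only [hochschildFace, Fin.cons_succ, Fin.val_succ, Nat.succ_lt_succ_iff,
      Nat.succ_inj, ← Fin.succ_castSucc]

end HochschildFace

section WeakStar

variable {𝕜 X Y Z : Type*} [NontriviallyNormedField 𝕜]
  [NormedAddCommGroup X] [NormedSpace 𝕜 X] [NormedAddCommGroup Y] [NormedSpace 𝕜 Y]
  [NormedAddCommGroup Z] [NormedSpace 𝕜 Z]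

theorem StrongDual.exists_tendsto_apply_of_norm_le [ProperSpace 𝕜] {ι : Type*} (U : Ultrafilter ι)
    (F : ι → StrongDual 𝕜 X) {K : ℝ} (hK : ∀ α, ‖F α‖ ≤ K) :
    ∃ f : StrongDual 𝕜 X, ∀ x, Tendsto (fun α => F α x) U (𝓝 (f x)) := by
  obtain ⟨f, -, hf⟩ := (WeakDual.isCompact_closedBall (0 : StrongDual 𝕜 X) K).ultrafilter_le_nhds
    (U.map (fun α => StrongDual.toWeakDual (F α)))
    (by
      rw [Ultrafilter.coe_map, le_principal_iff, mem_map]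
      exact Eventually.of_forall fun α => by simpa using hK α)
  exact ⟨WeakDual.toStrongDual f, fun x => ((WeakDual.eval_continuous x).tendsto f).comp hf⟩

theorem ContinuousLinearMap.comp_injective_of_subset_closure_range (d : Y →L[𝕜] X) {s : Set X}
    (hs : Dense (Submodule.span 𝕜 s : Set X)) (hd : s ⊆ closure (Set.range d)) :
    Function.Injective fun f : X →L[𝕜] Z => f.comp d := by
  intro f g hfg
  have hrange : Set.EqOn f g (Set.range d) := by
    rintro _ ⟨y, rfl⟩
    exact congr($hfg y)
  exact ContinuousLinearMap.ext_on hs fun x hx => hrange.closure f.continuous g.continuous (hd hx)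

/-- A dual cocycle is a coboundary as soon as the complex `Z → Y → X` has a uniformly bounded
approximate contracting homotopy `(S, S')` at `Y`. -/
theorem StrongDual.exists_comp_eq_of_tendsto_homotopy [ProperSpace 𝕜] {ι : Type*}
    {l : Filter ι} [l.NeBot] (d : Y →L[𝕜] X) (d' : Z →L[𝕜] Y) (S : ι → X →L[𝕜] Y)
    (S' : ι → Y →L[𝕜] Z) {K : ℝ} (hS : ∀ α, ‖S α‖ ≤ K) {s : Set Y}
    (hs : Dense (Submodule.span 𝕜 s : Set Y))
    (hhom : ∀ y ∈ s, Tendsto (fun α => S α (d y) + d' (S' α y)) l (𝓝 y))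
    (g : StrongDual 𝕜 Y) (hg : g.comp d' = 0) : ∃ f : StrongDual 𝕜 X, f.comp d = g := by
  obtain ⟨U, hU⟩ := exists_ultrafilter_le l
  obtain ⟨f, hf⟩ := exists_tendsto_apply_of_norm_le U (fun α => g.comp (S α)) (K := ‖g‖ * K)
    fun α => (g.opNorm_comp_le _).trans (mul_le_mul_of_nonneg_left (hS α) (norm_nonneg g))
  refine ⟨f, ContinuousLinearMap.ext_on hs fun y hy => ?_⟩
  have hgd' : ∀ z, g (d' z) = 0 := fun z => congr($hg z)
  have hlim : Tendsto (fun α => g (S α (d y))) l (𝓝 (g y)) := by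
    simpa only [Function.comp_def, map_add, hgd', add_zero] using
      (g.continuous.tendsto y).comp (hhom y hy)
  exact tendsto_nhds_unique (hf (d y)) (hlim.mono_left hU)

end WeakStar

theorem IsProjectiveTensorPower.exists_cons_lift {A : Type*} [NormedAddCommGroup A]
    [NormedSpace ℝ A] {n : ℕ} {T : Type*} [NormedAddCommGroup T] [NormedSpace ℝ T]
    [CompleteSpace T] {φ : ContinuousMultilinearMap ℝ (fun _ : Fin n => A) T}
    (hT : IsProjectiveTensorPower A n T φ) {T' : Type} [NormedAddCommGroup T'] [NormedSpace ℝ T']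
    [CompleteSpace T'] (ψ : ContinuousMultilinearMap ℝ (fun _ : Fin (n + 1) => A) T') (a : A) :
    ∃ S : T →L[ℝ] T', (∀ v, S (φ v) = ψ (Fin.cons a v)) ∧ ‖S‖ ≤ ‖ψ‖ * ‖a‖ := by
  obtain ⟨S, hSφ, hSnorm⟩ := hT.lift T' (ψ.curryLeft a)
  refine ⟨S, fun v => by rw [hSφ, ψ.curryLeft_apply], ?_⟩
  calc ‖S‖ = ‖ψ.curryLeft a‖ := hSnorm
    _ ≤ ‖ψ.curryLeft‖ * ‖a‖ := ψ.curryLeft.le_opNorm a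
    _ = ‖ψ‖ * ‖a‖ := by rw [ψ.curryLeft_norm]

def HasBoundedLeftApproxIdentity (A : Type*) [NormedRing A] : Prop :=
  ∃ (ι : Type) (l : Filter ι) (e : ι → A), l.NeBot ∧
    (∃ C : ℝ, ∀ α, ‖e α‖ ≤ C) ∧
    (∀ a : A, Tendsto (fun α => e α * a) l (𝓝 a))

theorem HasBoundedApproxIdentity.left {A : Type*} [NormedRing A]
    (h : HasBoundedApproxIdentity A) : HasBoundedLeftApproxIdentity A := by
  obtain ⟨ι, l, e, hl, hC, -, he⟩ := h
  exact ⟨ι, l, e, hl, hC, he⟩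

theorem tendsto_update_zero_mul {A : Type*} [Mul A] [TopologicalSpace A] {ι : Type*}
    {l : Filter ι} {e : ι → A}
    (he : ∀ a, Tendsto (fun α => e α * a) l (𝓝 a)) {n : ℕ} {Y : Type*} [TopologicalSpace Y]
    {f : (Fin (n + 1) → A) → Y} (hf : Continuous f) (v : Fin (n + 1) → A) :
    Tendsto (fun α => f (Function.update v 0 (e α * v 0))) l (𝓝 (f v)) := by
  have hupd := (tendsto_const_nhds (x := v)).update 0 (he (v 0))
  rw [Function.update_eq_self] at hupd
  exact (hf.tendsto v).comp hupd

section BarComplex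

variable {A : Type*} [NormedRing A] [NormedSpace ℝ A]
  {T : ℕ → Type} [∀ n, NormedAddCommGroup (T n)] [∀ n, NormedSpace ℝ (T n)]

/-- `dr` is the bar differential `d(a₀ ⊗ ⋯ ⊗ aₙ₊₁) = ∑ₖ (-1)ᵏ a₀ ⊗ ⋯ ⊗ aₖaₖ₊₁ ⊗ ⋯ ⊗ aₙ₊₁`
on the tensor powers `T n = A^⊗̂(n+1)`. -/
def IsBarDifferential (φ : ∀ n, ContinuousMultilinearMap ℝ (fun _ : Fin (n + 1) => A) (T n))
    (dr : ∀ n, T (n + 1) →L[ℝ] T n) : Prop :=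
  ∀ n (v : Fin (n + 2) → A),
    dr n (φ (n + 1) v) = ∑ k : Fin (n + 1), ((-1 : ℝ) ^ (k : ℕ)) • φ n (hochschildFace v k)

variable {φ : ∀ n, ContinuousMultilinearMap ℝ (fun _ : Fin (n + 1) => A) (T n)}
  {dr : ∀ n, T (n + 1) →L[ℝ] T n}

namespace IsBarDifferential

theorem apply_zero_cons (hdr : IsBarDifferential φ dr) (e : A) (v : Fin 1 → A) :
    dr 0 (φ 1 (Fin.cons e v)) = φ 0 (Function.update v 0 (e * v 0)) := by
  rw [hdr, Fin.sum_univ_one, hochschildFace_cons_zero]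
  simp

theorem apply_succ_cons (hdr : IsBarDifferential φ dr) {n : ℕ} (e : A) (v : Fin (n + 2) → A) :
    dr (n + 1) (φ (n + 2) (Fin.cons e v)) = φ (n + 1) (Function.update v 0 (e * v 0)) -
      ∑ k : Fin (n + 1), ((-1 : ℝ) ^ (k : ℕ)) • φ (n + 1) (Fin.cons e (hochschildFace v k)) := by
  rw [hdr (n + 1), Fin.sum_univ_succ]
  simp only [hochschildFace_cons_zero, hochschildFace_cons_succ,
    Fin.val_zero, pow_zero, one_smul, Fin.val_succ, pow_succ, mul_neg_one, neg_smul,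
    Finset.sum_neg_distrib, sub_eq_add_neg]

theorem cons_homotopy (hdr : IsBarDifferential φ dr) {n : ℕ} {e : A} {S : T n →L[ℝ] T (n + 1)}
    {S' : T (n + 1) →L[ℝ] T (n + 2)} (hS : ∀ v, S (φ n v) = φ (n + 1) (Fin.cons e v))
    (hS' : ∀ v, S' (φ (n + 1) v) = φ (n + 2) (Fin.cons e v)) (v : Fin (n + 2) → A) :
    S (dr n (φ (n + 1) v)) + dr (n + 1) (S' (φ (n + 1) v)) =
      φ (n + 1) (Function.update v 0 (e * v 0)) := by
  simp only [hS', hdr.apply_succ_cons, hdr n v, map_sum, map_smul, hS]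
  abel

theorem dual_exact [∀ n, CompleteSpace (T n)]
    (hA : HasBoundedLeftApproxIdentity A) (hT : ∀ n, IsProjectiveTensorPower A (n + 1) (T n) (φ n))
    (hdr : IsBarDifferential φ dr) :
    Function.Injective (fun f : StrongDual ℝ (T 0) => f.comp (dr 0)) ∧
      ∀ n (g : StrongDual ℝ (T (n + 1))), g.comp (dr (n + 1)) = 0 →
        ∃ f : StrongDual ℝ (T n), f.comp (dr n) = g := by
  obtain ⟨ι, l, e, hl, ⟨C, hC⟩, he⟩ := hA
  have := hl
  have hdense : ∀ n, Dense (Submodule.span ℝ (Set.range (φ n)) : Set (T n)) := fun n =>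
    Submodule.dense_iff_topologicalClosure_eq_top.mpr (hT n).dense
  choose S hSφ hSnorm using fun m α => (hT m).exists_cons_lift (φ (m + 1)) (e α)
  refine ⟨(dr 0).comp_injective_of_subset_closure_range (hdense 0) ?_, fun n g hg => ?_⟩
  · rintro _ ⟨v, rfl⟩
    refine mem_closure_of_tendsto (tendsto_update_zero_mul he (φ 0).coe_continuous v)
      (Eventually.of_forall fun α => ⟨S 0 α (φ 0 v), ?_⟩)
    rw [hSφ, hdr.apply_zero_cons]
  · refine StrongDual.exists_comp_eq_of_tendsto_homotopy (l := l) (dr n) (dr (n + 1))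
      (S n) (S (n + 1))
      (fun α => (hSnorm n α).trans (mul_le_mul_of_nonneg_left (hC α) (norm_nonneg _)))
      (hdense (n + 1)) ?_ g hg
    rintro _ ⟨v, rfl⟩
    exact (tendsto_update_zero_mul he (φ (n + 1)).coe_continuous v).congr fun α =>
      (hdr.cons_homotopy (hSφ n α) (hSφ (n + 1) α) v).symm

end IsBarDifferential

end BarComplex

theorem exists_norm_sub_le_of_exact {𝕜 E F G : Type*} [NontriviallyNormedField 𝕜]
    [NormedAddCommGroup F] [NormedSpace 𝕜 F] [CompleteSpace F]
    [NormedAddCommGroup G] [NormedSpace 𝕜 G] [CompleteSpace G]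
    (i : E → F) (j : F →L[𝕜] G) (hj : Function.Surjective j)
    (hexact : ∀ a : F, j a = 0 ↔ ∃ b, i b = a) :
    ∃ K > 0, ∀ a : F, ∃ b : E, ‖a - i b‖ ≤ K * ‖j a‖ := by
  obtain ⟨K, hK, hpre⟩ := j.exists_preimage_norm_le hj
  refine ⟨K, hK, fun a => ?_⟩
  obtain ⟨a', ha', hnorm⟩ := hpre (j a)
  obtain ⟨b, hb⟩ := (hexact (a - a')).mp (by rw [map_sub, ha', sub_self])
  exact ⟨b, by rwa [hb, sub_sub_cancel]⟩

theorem norm_add_sub_mul_le {R : Type*} [NonUnitalSeminormedRing R] (x y : R) :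
    ‖x + y - y * x‖ ≤ ‖x‖ + ‖y‖ + ‖y‖ * ‖x‖ :=
  (norm_sub_le _ _).trans (add_le_add (norm_add_le x y) (norm_mul_le y x))

theorem norm_sub_add_sub_mul_mul_le {R : Type*} [NonUnitalSeminormedRing R] (a u y c : R) :
    ‖a - (u + y - y * u) * a‖ ≤ (1 + ‖y‖) * ‖a - u * a - c‖ + ‖c - y * c‖ := by
  have hdecomp : a - (u + y - y * u) * a =
      (a - u * a - c) - y * (a - u * a - c) + (c - y * c) := by
    noncomm_ring
  rw [hdecomp]
  linarith [norm_add_le ((a - u * a - c) - y * (a - u * a - c)) (c - y * c),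
    norm_sub_le (a - u * a - c) (y * (a - u * a - c)), norm_mul_le y (a - u * a - c)]

theorem HasBoundedLeftApproxIdentity.of_extension {B A D : Type*}
    [NormedRing B] [NormedAlgebra ℝ B]
    [NormedRing A] [NormedAlgebra ℝ A] [CompleteSpace A]
    [NormedRing D] [NormedAlgebra ℝ D] [CompleteSpace D]
    (i : B →ₐ[ℝ] A) (j : A →ₐ[ℝ] D) (hi_cont : Continuous i) (hj_cont : Continuous j)
    (hj : Function.Surjective j) (hexact : ∀ a : A, j a = 0 ↔ ∃ b, i b = a)
    (hB : HasBoundedLeftApproxIdentity B) (hD : HasBoundedLeftApproxIdentity D) :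
    HasBoundedLeftApproxIdentity A := by
  obtain ⟨ιB, lB, f, hlB, ⟨CB, hCB⟩, hf⟩ := hB
  obtain ⟨ιD, lD, e, hlD, ⟨CD, hCD⟩, he⟩ := hD
  let i' : B →L[ℝ] A := ⟨i.toLinearMap, hi_cont⟩
  let j' : A →L[ℝ] D := ⟨j.toLinearMap, hj_cont⟩
  have hif : ∀ β, ‖i (f β)‖ ≤ ‖i'‖ * CB := fun β =>
    (i'.le_opNorm _).trans (mul_le_mul_of_nonneg_left (hCB β) (norm_nonneg _))
  obtain ⟨K, hK, hpre⟩ : ∃ K > 0, ∀ d, ∃ a, j a = d ∧ ‖a‖ ≤ K * ‖d‖ :=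
    j'.exists_preimage_norm_le hj
  choose u hju hu using fun α => hpre (e α)
  obtain ⟨K', -, hlift⟩ : ∃ K' > 0, ∀ a : A, ∃ b : B, ‖a - i b‖ ≤ K' * ‖j a‖ :=
    exists_norm_sub_le_of_exact i j' hj hexact
  let E : ιD × ιB → A := fun p => u p.1 + i (f p.2) - i (f p.2) * u p.1
  have hE_bound : ∀ p, ‖E p‖ ≤ K * CD + ‖i'‖ * CB + ‖i'‖ * CB * (K * CD) := fun p => by
    have hup : ‖u p.1‖ ≤ K * CD := (hu p.1).trans (mul_le_mul_of_nonneg_left (hCD p.1) hK.le)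
    exact (norm_add_sub_mul_le _ _).trans (add_le_add (add_le_add hup (hif p.2))
      (mul_le_mul (hif p.2) hup (norm_nonneg _) ((norm_nonneg _).trans (hif p.2))))
  refine ⟨ιD × ιB, lD.bind fun α => lB.map (Prod.mk α), E, hlD.bind fun _ => map_neBot,
    ⟨_, hE_bound⟩, fun a => ?_⟩
  choose b hb using fun α => hlift (a - u α * a)
  have hsmall : ∀ α β, ‖a - E (α, β) * a‖ ≤
      (1 + ‖i'‖ * CB) * (K' * ‖j a - e α * j a‖) + ‖i'‖ * ‖b α - f β * b α‖ := by
    intro α β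
    have hx : ‖a - u α * a - i (b α)‖ ≤ K' * ‖j a - e α * j a‖ := by
      simpa only [map_sub, map_mul, hju] using hb α
    refine (norm_sub_add_sub_mul_mul_le a (u α) (i (f β)) (i (b α))).trans (add_le_add ?_ ?_)
    · exact mul_le_mul (by linarith [hif β]) hx (norm_nonneg _)
        (by linarith [norm_nonneg (i (f β)), hif β])
    · rw [← map_mul, ← map_sub]
      exact i'.le_opNorm _
  have hlimD : Tendsto (fun α => (1 + ‖i'‖ * CB) * (K' * ‖j a - e α * j a‖)) lD (𝓝 0) := by
    simpa using (((tendsto_const_nhds (x := j a)).sub (he (j a))).norm.const_mul K').const_mul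
      (1 + ‖i'‖ * CB)
  have hlimB : ∀ α, Tendsto (fun β => ‖i'‖ * ‖b α - f β * b α‖) lB (𝓝 0) := fun α => by
    simpa using ((tendsto_const_nhds (x := b α)).sub (hf (b α))).norm.const_mul ‖i'‖
  rw [tendsto_iff_norm_sub_tendsto_zero]
  refine squeeze_zero (fun _ => norm_nonneg _) (fun p => ?_)
    (tendsto_add_bind_map_prodMk hlimD hlimB)
  rw [norm_sub_rev]
  exact hsmall p.1 p.2

theorem bar_cohomology_of_extension_general
    {B A D : Type*}
    [NormedRing B] [NormedAlgebra ℝ B]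
    [NormedRing A] [NormedAlgebra ℝ A] [CompleteSpace A]
    [NormedRing D] [NormedAlgebra ℝ D] [CompleteSpace D]
    (i : B →ₐ[ℝ] A) (j : A →ₐ[ℝ] D)
    (hi_cont : Continuous i) (hj_cont : Continuous j)
    (hj : Function.Surjective j)
    (hexact : ∀ a : A, j a = 0 ↔ ∃ b, i b = a)
    (hB : HasBoundedApproxIdentity B) (hD : HasBoundedApproxIdentity D)
    -- the bar complex of A
    (TA : ℕ → Type)
    [∀ n, NormedAddCommGroup (TA n)] [∀ n, NormedSpace ℝ (TA n)] [∀ n, CompleteSpace (TA n)]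
    (φA : ∀ n, ContinuousMultilinearMap ℝ (fun _ : Fin (n + 1) => A) (TA n))
    (hTA : ∀ n, IsProjectiveTensorPower A (n + 1) (TA n) (φA n))
    (drA : ∀ n, TA (n + 1) →L[ℝ] TA n)
    (hdrA : ∀ n (v : Fin (n + 2) → A),
      drA n (φA (n + 1) v) = ∑ k : Fin (n + 1), ((-1 : ℝ) ^ (k : ℕ)) • φA n (hochschildFace v k))
    -- the bar complex of D
    (TD : ℕ → Type)
    [∀ n, NormedAddCommGroup (TD n)] [∀ n, NormedSpace ℝ (TD n)] [∀ n, CompleteSpace (TD n)]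
    (φD : ∀ n, ContinuousMultilinearMap ℝ (fun _ : Fin (n + 1) => D) (TD n))
    (hTD : ∀ n, IsProjectiveTensorPower D (n + 1) (TD n) (φD n))
    (drD : ∀ n, TD (n + 1) →L[ℝ] TD n)
    (hdrD : ∀ n (v : Fin (n + 2) → D),
      drD n (φD (n + 1) v) = ∑ k : Fin (n + 1), ((-1 : ℝ) ^ (k : ℕ)) • φD n (hochschildFace v k)) :
    -- HR^n(D) = 0 for all n …
    (Function.Injective (fun f : StrongDual ℝ (TD 0) => f.comp (drD 0)) ∧
      ∀ n (g : StrongDual ℝ (TD (n + 1))), g.comp (drD (n + 1)) = 0 →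
        ∃ f : StrongDual ℝ (TD n), f.comp (drD n) = g) ∧
    -- … hence HR^n(A) = HR^n(D) = 0 for all n
    (Function.Injective (fun f : StrongDual ℝ (TA 0) => f.comp (drA 0)) ∧
      ∀ n (g : StrongDual ℝ (TA (n + 1))), g.comp (drA (n + 1)) = 0 →
        ∃ f : StrongDual ℝ (TA n), f.comp (drA n) = g) := by
  have hA : HasBoundedLeftApproxIdentity A :=
    .of_extension i j hi_cont hj_cont hj hexact hB.left hD.left
  exact ⟨IsBarDifferential.dual_exact hD.left hTD hdrD,
    IsBarDifferential.dual_exact hA hTA hdrA⟩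

/-- For an extension 0 → B →^i A →^j D → 0 of Banach algebras in which
both B and D have bounded approximate identities (e.g. an extension of C*-algebras),
the Bar cohomology groups satisfy HR^n(A) = HR^n(D) for all n ≥ 0: in fact both
vanish, i.e. the duals of the bar complexes of both D and A are exact. -/
theorem bar_cohomology_of_extension
    {B A D : Type*}
    [NormedRing B] [NormedAlgebra ℝ B] [CompleteSpace B]
    [NormedRing A] [NormedAlgebra ℝ A] [CompleteSpace A]
    [NormedRing D] [NormedAlgebra ℝ D] [CompleteSpace D]
    (i : B →ₐ[ℝ] A) (j : A →ₐ[ℝ] D)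
    (hi_cont : Continuous i) (hj_cont : Continuous j)
    (hi : Function.Injective i) (hj : Function.Surjective j)
    (hexact : ∀ a : A, j a = 0 ↔ ∃ b, i b = a)
    (hB : HasBoundedApproxIdentity B) (hD : HasBoundedApproxIdentity D)
    -- the bar complex of A
    (TA : ℕ → Type)
    [∀ n, NormedAddCommGroup (TA n)] [∀ n, NormedSpace ℝ (TA n)] [∀ n, CompleteSpace (TA n)]
    (φA : ∀ n, ContinuousMultilinearMap ℝ (fun _ : Fin (n + 1) => A) (TA n))
    (hTA : ∀ n, IsProjectiveTensorPower A (n + 1) (TA n) (φA n))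
    (drA : ∀ n, TA (n + 1) →L[ℝ] TA n)
    (hdrA : ∀ n (v : Fin (n + 2) → A),
      drA n (φA (n + 1) v) = ∑ k : Fin (n + 1), ((-1 : ℝ) ^ (k : ℕ)) • φA n (hochschildFace v k))
    -- the bar complex of D
    (TD : ℕ → Type)
    [∀ n, NormedAddCommGroup (TD n)] [∀ n, NormedSpace ℝ (TD n)] [∀ n, CompleteSpace (TD n)]
    (φD : ∀ n, ContinuousMultilinearMap ℝ (fun _ : Fin (n + 1) => D) (TD n))
    (hTD : ∀ n, IsProjectiveTensorPower D (n + 1) (TD n) (φD n))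
    (drD : ∀ n, TD (n + 1) →L[ℝ] TD n)
    (hdrD : ∀ n (v : Fin (n + 2) → D),
      drD n (φD (n + 1) v) = ∑ k : Fin (n + 1), ((-1 : ℝ) ^ (k : ℕ)) • φD n (hochschildFace v k)) :
    -- HR^n(D) = 0 for all n …
    (Function.Injective (fun f : StrongDual ℝ (TD 0) => f.comp (drD 0)) ∧
      ∀ n (g : StrongDual ℝ (TD (n + 1))), g.comp (drD (n + 1)) = 0 →
        ∃ f : StrongDual ℝ (TD n), f.comp (drD n) = g) ∧
    -- … hence HR^n(A) = HR^n(D) = 0 for all n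
    (Function.Injective (fun f : StrongDual ℝ (TA 0) => f.comp (drA 0)) ∧
      ∀ n (g : StrongDual ℝ (TA (n + 1))), g.comp (drA (n + 1)) = 0 →
        ∃ f : StrongDual ℝ (TA n), f.comp (drA n) = g) :=
  bar_cohomology_of_extension_general i j hi_cont hj_cont hj hexact hB hD TA φA hTA drA hdrA TD φD
    hTD drD hdrD

end
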